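/- Let (A, Con, ⊢, Δ) be an information system with witnesses. Then the domain of states |A| is algebraic if and only if A satisfies condition (ALG): for all (i,X) ∈ Con and finite F ⊆ A, if (i,X) ⊢ F then there exists a reflexive (j,V) ∈ Con (i.e. (j,V) ⊢ j and (j,V) ⊢ V) with (i,X) ⊢ (j,V) and (j,V) ⊢ F. -/

import Mathlib

/-- The way-below (approximation) relation in a preorder: `x` approximates `y` if
for every directed set `S` whose least upper bound exists, `y ≤ sup S` implies
`x ≤ u` for some `u ∈ S`. -/
def wayBelow {α : Type*} [Preorder α] (x y : α) : Prop :=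
  ∀ S : Set α, DirectedOn (· ≤ ·) S → S.Nonempty →
    ∀ l, IsLUB S l → y ≤ l → ∃ u ∈ S, x ≤ u

/-- Information system with witnesses (Definition 3.1). -/
structure IWS (A : Type*) where
  Δ : A
  Con : A → Finset A → Prop
  ent : A → Finset A → A → Prop
  entCon : ∀ i X a, ent i X a → Con i X
  ax1 : ∀ i, Con i {i}
  ax2 : ∀ i X Y, Y ⊆ X → Con i X → Con i Y
  ax3 : ∀ i, ent i ∅ Δ
  ax4 : ∀ i X Y, Con i X → (∀ a ∈ Y, ent i X a) → Con i Y
  ax5 : ∀ i X Y a, Con i X → Con i Y → X ⊆ Y → ent i X a → ent i Y a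
  ax6 : ∀ i X Y a, Con i X → (∀ b ∈ Y, ent i X b) → ent i Y a → ent i X a
  ax7 : ∀ i X a, ent i X a → ∃ Z, Con i Z ∧ (∀ z ∈ Z, ent i X z) ∧ ent i Z a
  ax8 : ∀ i X Y, Con i X → (∀ y ∈ Y, ent i X y) → ∃ e, ent i X e ∧ Con e Y
  ax9 : ∀ i j, Con j {i} → ∀ X, Con i X → Con j X
  ax10 : ∀ i j X a, Con j {i} → Con i X → ent i X a → ent j X a
  ax11 : ∀ i j X a, Con j {i} → Con i X → ent j X a → ent i X a

namespace IWS

variable {A : Type*}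

/-- A state of an information system with witnesses (Definition 3.5):
finitely consistent, entailment-closed and derivable. -/
def state (S : IWS A) (x : Set A) : Prop :=
  (∀ F : Finset A, ↑F ⊆ x → ∃ i ∈ x, S.Con i F) ∧
  (∀ i ∈ x, ∀ X : Finset A, ↑X ⊆ x → ∀ a, S.Con i X → S.ent i X a → a ∈ x) ∧
  (∀ a ∈ x, ∃ i ∈ x, ∃ X : Finset A, ↑X ⊆ x ∧ S.Con i X ∧ S.ent i X a)

/-- X-equivalence of witnesses (Definition 5.1). -/
def weq (S : IWS A) (X : Finset A) (i j : A) : Prop :=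
  ∃ (n : ℕ) (a k : ℕ → A), a 0 = i ∧ a n = j ∧
    ∀ ν, 1 ≤ ν → ν ≤ n →
      S.Con (a (ν - 1)) X ∧ S.Con (a ν) X ∧
      S.Con (k ν) {a (ν - 1)} ∧ S.Con (k ν) {a ν}
end IWS

/-- Approximable mappings between information systems with witnesses (Definition 4.1). -/
structure AppMap {A A' : Type*} (S : IWS A) (S' : IWS A') where
  rel : A → Finset A → A' → Prop
  relCon : ∀ i X b, rel i X b → S.Con i X
  am1 : rel S.Δ ∅ S'.Δ
  am2 : ∀ i X X' b, S.Con i X → S.Con i X' → X ⊆ X' → rel i X b → rel i X' b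
  am3 : ∀ i X X' b, S.Con i X → (∀ a ∈ X', S.ent i X a) → rel i X' b → rel i X b
  am4 : ∀ i X b, S.Con i X → rel i X b →
    ∃ U, S.Con i U ∧ (∀ u ∈ U, S.ent i X u) ∧ rel i U b
  am5 : ∀ i X k Y b, S.Con i X → S'.Con k Y → rel i X k → (∀ y ∈ Y, rel i X y) →
    S'.ent k Y b → rel i X b
  am6 : ∀ i X b, S.Con i X → rel i X b →
    ∃ d V, S'.Con d V ∧ rel i X d ∧ (∀ v ∈ V, rel i X v) ∧ S'.ent d V b
  am7 : ∀ i X F, S.Con i X → (∀ c ∈ F, rel i X c) → ∃ e, rel i X e ∧ S'.Con e F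
  am8 : ∀ i j X b, S.Con j {i} → S.Con i X → rel i X b → rel j X b
  am9 : ∀ i j X b, S.Con j {i} → S.Con i X → rel j X b → rel i X b

/-!
A consistent pair `(i, X)` generates the state `[X]_i` of everything it entails, and every
state `x` is the directed union of the `[X]_i` generated from inside `x`. A reflexive pair
`(j, V)` is entailed by its own state, so as soon as a directed union of states reaches
`[V]_j` one member already contains `j` and `V`, hence `[V]_j`: the state is compact.
Conversely, a compact state is below, hence equal to, one of its generated states, and the
generating pair is then reflexive. Condition (ALG) says exactly that reflexive pairs are
cofinal among the pairs generating substates of a given state.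
-/

theorem wayBelow.trans_le {α : Type*} [Preorder α] {x y z : α} (hxy : wayBelow x y)
    (hyz : y ≤ z) : wayBelow x z :=
  fun D hdir hne l hl hzl => hxy D hdir hne l hl (hyz.trans hzl)

namespace IWS

variable {A : Type*} {S : IWS A}

abbrev State (S : IWS A) : Type _ := {x : Set A // S.state x}

def entailed (S : IWS A) (i : A) (X : Finset A) : Set A := {a | S.ent i X a}

def IsReflexive (S : IWS A) (j : A) (V : Finset A) : Prop :=
  S.ent j V j ∧ ∀ v ∈ V, S.ent j V v

theorem IsReflexive.con {j : A} {V : Finset A} (h : S.IsReflexive j V) : S.Con j V :=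
  S.entCon j V j h.1

theorem con_singleton_of_ent {i a : A} {X : Finset A} (hX : S.Con i X) (ha : S.ent i X a) :
    S.Con i {a} :=
  S.ax4 i X {a} hX (by simpa using ha)

theorem ent_of_con_insert [DecidableEq A] {m i a : A} {W X : Finset A}
    (hmW : S.Con m (insert i W)) (hXW : X ⊆ W) (hiX : S.Con i X) (ha : S.ent i X a) :
    S.ent m W a := by
  have hmi : S.Con m {i} := S.ax2 m _ _ (by simp) hmW
  have hmW' : S.Con m W := S.ax2 m _ _ (Finset.subset_insert i W) hmW
  exact S.ax5 m X W a (S.ax9 i m hmi X hiX) hmW' hXW (S.ax10 i m X a hmi hiX ha)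

theorem state_entailed {i : A} {X : Finset A} (hX : S.Con i X) : S.state (S.entailed i X) := by
  classical
  refine ⟨fun F hF => ?_, fun k hk Y hY a hkY ha => ?_, fun a ha => ?_⟩
  · exact S.ax8 i X F hX hF
  · exact S.ax6 i X Y a hX hY (S.ax10 k i Y a (con_singleton_of_ent hX hk) hkY ha)
  · obtain ⟨Z, hZ, hXZ, hZa⟩ := S.ax7 i X a ha
    obtain ⟨e, hie, heaZ⟩ := S.ax8 i X (insert a Z) hX (by
      simpa [Set.insert_subset_iff] using ⟨ha, hXZ⟩)
    have heZ : S.Con e Z := S.ax2 e _ Z (Finset.subset_insert a Z) heaZ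
    exact ⟨e, hie, Z, hXZ, heZ, S.ax11 e i Z a (con_singleton_of_ent hX hie) heZ hZa⟩

def principal {i : A} {X : Finset A} (hX : S.Con i X) : S.State :=
  ⟨S.entailed i X, state_entailed hX⟩

theorem entailed_subset {x : Set A} (hx : S.state x) {i : A} {X : Finset A}
    (hi : i ∈ x) (hX : ↑X ⊆ x) (hiX : S.Con i X) : S.entailed i X ⊆ x :=
  fun a ha => hx.2.1 i hi X hX a hiX ha

theorem entailed_subset_entailed {m i : A} {W X : Finset A} (hmW : S.Con m W)
    (hi : S.ent m W i) (hX : ∀ a ∈ X, S.ent m W a) (hiX : S.Con i X) :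
    S.entailed i X ⊆ S.entailed m W :=
  entailed_subset (state_entailed hmW) hi hX hiX

theorem exists_ent_of_finset_subset {x : Set A} (hx : S.state x) {G : Finset A}
    (hG : ↑G ⊆ x) : ∃ m ∈ x, ∃ W : Finset A, ↑W ⊆ x ∧ S.Con m W ∧ ∀ g ∈ G, S.ent m W g := by
  classical
  induction G using Finset.induction_on with
  | empty =>
    obtain ⟨m, hm, hmC⟩ := hx.1 ∅ (by simp)
    exact ⟨m, hm, ∅, by simp, hmC, by simp⟩
  | insert g G _ ih =>
    rw [Finset.coe_insert, Set.insert_subset_iff] at hG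
    obtain ⟨m, hm, W, hW, hmW, hGW⟩ := ih hG.2
    obtain ⟨i, hi, X, hX, hiX, hg⟩ := hx.2.2 g hG.1
    obtain ⟨k, hk, hkWX⟩ := hx.1 (insert m (insert i (W ∪ X))) (by
      simp only [Finset.coe_insert, Finset.coe_union, Set.insert_subset_iff]
      exact ⟨hm, hi, Set.union_subset hW hX⟩)
    have hkm : S.Con k (insert m (W ∪ X)) := S.ax2 k _ _ (by grind) hkWX
    have hki : S.Con k (insert i (W ∪ X)) := S.ax2 k _ _ (by grind) hkWX
    refine ⟨k, hk, W ∪ X, by simpa using Set.union_subset hW hX,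
      S.ax2 k _ _ (by grind) hkWX, fun a ha => ?_⟩
    rcases Finset.mem_insert.1 ha with rfl | ha
    · exact ent_of_con_insert hki Finset.subset_union_right hiX hg
    · exact ent_of_con_insert hkm Finset.subset_union_left hmW (hGW a ha)

theorem state_biUnion {D : Set S.State} (hdir : DirectedOn (· ≤ ·) D) (hne : D.Nonempty) :
    S.state (⋃ u ∈ D, (u : Set A)) := by
  classical
  have hfin : ∀ F : Finset A, ↑F ⊆ ⋃ u ∈ D, (u : Set A) → ∃ u ∈ D, ↑F ⊆ (u : Set A) :=
    fun F hF => hdir.exists_mem_subset_of_finset_subset_biUnion hne hF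
  refine ⟨fun F hF => ?_, fun i hi X hX a hiX ha => ?_, fun a ha => ?_⟩
  · obtain ⟨u, hu, hFu⟩ := hfin F hF
    obtain ⟨i, hi, hiF⟩ := u.2.1 F hFu
    exact ⟨i, Set.mem_biUnion hu hi, hiF⟩
  · obtain ⟨u, hu, hiXu⟩ := hfin (insert i X) (by
      rw [Finset.coe_insert, Set.insert_subset_iff]
      exact ⟨hi, hX⟩)
    rw [Finset.coe_insert, Set.insert_subset_iff] at hiXu
    exact Set.mem_biUnion hu (u.2.2.1 i hiXu.1 X hiXu.2 a hiX ha)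
  · obtain ⟨u, hu, hau⟩ := Set.mem_iUnion₂.1 ha
    obtain ⟨i, hi, X, hX, hiX, hia⟩ := u.2.2.2 a hau
    exact ⟨i, Set.mem_biUnion hu hi, X, hX.trans (Set.subset_biUnion_of_mem hu), hiX, hia⟩

/-- The supremum is the union, since the union is a state. -/
theorem exists_mem_finset_subset_of_isLUB {D : Set S.State} (hdir : DirectedOn (· ≤ ·) D)
    (hne : D.Nonempty) {l : S.State} (hl : IsLUB D l) {F : Finset A} (hF : ↑F ⊆ (l : Set A)) :
    ∃ u ∈ D, ↑F ⊆ (u : Set A) := by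
  have hl_sub : l ≤ ⟨⋃ u ∈ D, (u : Set A), state_biUnion hdir hne⟩ :=
    hl.2 fun u hu => Set.subset_biUnion_of_mem (u := Subtype.val) hu
  exact hdir.exists_mem_subset_of_finset_subset_biUnion hne (hF.trans hl_sub)

theorem wayBelow_principal_self {j : A} {V : Finset A} (hjV : S.IsReflexive j V) :
    wayBelow (S.principal hjV.con) (S.principal hjV.con) := by
  classical
  intro D hdir hne l hl hle
  obtain ⟨u, hu, hjVu⟩ := exists_mem_finset_subset_of_isLUB hdir hne hl (F := insert j V) (by
    rw [Finset.coe_insert, Set.insert_subset_iff]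
    exact ⟨hle hjV.1, fun v hv => hle (hjV.2 v hv)⟩)
  rw [Finset.coe_insert, Set.insert_subset_iff] at hjVu
  exact ⟨u, hu, entailed_subset u.2 hjVu.1 hjVu.2 hjV.con⟩

def principals (x : S.State) : Set S.State :=
  {u | ∃ (i : A) (X : Finset A) (hiX : S.Con i X), i ∈ (x : Set A) ∧ ↑X ⊆ (x : Set A) ∧
    u = S.principal hiX}

theorem principals_nonempty (x : S.State) : (principals x).Nonempty := by
  obtain ⟨i, hi, hiC⟩ := x.2.1 ∅ (by simp)
  exact ⟨_, i, ∅, hiC, hi, by simp, rfl⟩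

theorem directedOn_principals (x : S.State) : DirectedOn (· ≤ ·) (principals x) := by
  classical
  rintro _ ⟨i, X, hiX, hi, hX, rfl⟩ _ ⟨i', X', hiX', hi', hX', rfl⟩
  obtain ⟨m, hm, W, hW, hmW, hent⟩ :=
    exists_ent_of_finset_subset x.2 (G := insert i X ∪ insert i' X') (by
      simp only [Finset.coe_union, Finset.coe_insert, Set.union_subset_iff, Set.insert_subset_iff]
      exact ⟨⟨hi, hX⟩, hi', hX'⟩)
  refine ⟨S.principal hmW, ⟨m, W, hmW, hm, hW, rfl⟩, ?_, ?_⟩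
  · exact entailed_subset_entailed hmW (hent i (by simp))
      (fun a ha => hent a (by simp [ha])) hiX
  · exact entailed_subset_entailed hmW (hent i' (by simp))
      (fun a ha => hent a (by simp [ha])) hiX'

theorem isLUB_principals (x : S.State) : IsLUB (principals x) x := by
  refine ⟨?_, fun w hw a ha => ?_⟩
  · rintro _ ⟨i, X, hiX, hi, hX, rfl⟩
    exact entailed_subset x.2 hi hX hiX
  · obtain ⟨i, hi, X, hX, hiX, hia⟩ := x.2.2.2 a ha
    exact hw ⟨i, X, hiX, hi, hX, rfl⟩ hia

theorem exists_isReflexive_of_wayBelow_self {u : S.State} (hu : wayBelow u u) :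
    ∃ (m : A) (W : Finset A) (hmW : S.IsReflexive m W), u = S.principal hmW.con := by
  obtain ⟨_, ⟨m, W, hmW, hm, hW, rfl⟩, hle⟩ :=
    hu _ (directedOn_principals u) (principals_nonempty u) u (isLUB_principals u) le_rfl
  have hge : S.principal hmW ≤ u := (isLUB_principals u).1 ⟨m, W, hmW, hm, hW, rfl⟩
  have heq : u = S.principal hmW := le_antisymm hle hge
  exact ⟨m, W, ⟨hle hm, fun v hv => hle (hW hv)⟩, heq⟩

def ALG (S : IWS A) : Prop :=
  ∀ i (X F : Finset A), S.Con i X → (∀ a ∈ F, S.ent i X a) →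
    ∃ j V, S.Con j V ∧ S.ent j V j ∧ (∀ v ∈ V, S.ent j V v) ∧
      S.ent i X j ∧ (∀ v ∈ V, S.ent i X v) ∧ ∀ a ∈ F, S.ent j V a

theorem isCofinalFor_principals_inter_wayBelow_self (hALG : S.ALG) (x : S.State) :
    IsCofinalFor (principals x) (principals x ∩ {u | wayBelow u u}) := by
  classical
  rintro _ ⟨i, X, hiX, hi, hX, rfl⟩
  obtain ⟨m, hm, W, hW, hmW, hmiX⟩ := exists_ent_of_finset_subset x.2 (G := insert i X) (by
    rw [Finset.coe_insert, Set.insert_subset_iff]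
    exact ⟨hi, hX⟩)
  obtain ⟨j, V, -, hjj, hVV, hmj, hmV, hjiX⟩ := hALG m W (insert i X) hmW hmiX
  have hjV : S.IsReflexive j V := ⟨hjj, hVV⟩
  have hxmW : S.entailed m W ⊆ x := entailed_subset x.2 hm hW hmW
  have hjV_mem : S.principal hjV.con ∈ principals x :=
    ⟨j, V, hjV.con, hxmW hmj, fun v hv => hxmW (hmV v hv), rfl⟩
  refine ⟨S.principal hjV.con, ⟨hjV_mem, wayBelow_principal_self hjV⟩, ?_⟩
  exact entailed_subset_entailed hjV.con (hjiX i (by simp)) (fun a ha => hjiX a (by simp [ha]))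
    hiX

end IWS

/-- Theorem 3.10: the domain of states is algebraic iff condition (ALG) holds. -/
theorem algebraic_iff_ALG {A : Type*} (S : IWS A) :
    (∀ x : {x : Set A // S.state x},
      ∃ D ⊆ {u : {x : Set A // S.state x} | wayBelow u u ∧ wayBelow u x},
        D.Nonempty ∧ DirectedOn (· ≤ ·) D ∧ IsLUB D x) ↔
    (∀ i (X F : Finset A), S.Con i X → (∀ a ∈ F, S.ent i X a) →
      ∃ j V, S.Con j V ∧ S.ent j V j ∧ (∀ v ∈ V, S.ent j V v) ∧
        S.ent i X j ∧ (∀ v ∈ V, S.ent i X v) ∧ ∀ a ∈ F, S.ent j V a) := by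
  constructor
  · intro halg i X F hiX hF
    obtain ⟨D, hDcpt, hDne, hDdir, hDlub⟩ := halg (S.principal hiX)
    obtain ⟨u, huD, hFu⟩ := IWS.exists_mem_finset_subset_of_isLUB hDdir hDne hDlub hF
    obtain ⟨j, V, hjV, rfl⟩ := IWS.exists_isReflexive_of_wayBelow_self (hDcpt huD).1
    have hjV_le : S.entailed j V ⊆ S.entailed i X := hDlub.1 huD
    exact ⟨j, V, hjV.con, hjV.1, hjV.2, hjV_le hjV.1, fun v hv => hjV_le (hjV.2 v hv), hFu⟩
  · intro hALG x
    have hcof := IWS.isCofinalFor_principals_inter_wayBelow_self hALG x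
    refine ⟨IWS.principals x ∩ {u | wayBelow u u},
      fun u hu => ⟨hu.2, hu.2.trans_le ((IWS.isLUB_principals x).1 hu.1)⟩,
      hcof.nonempty (IWS.principals_nonempty x), ?_, ?_⟩
    · exact (IWS.directedOn_principals x).of_isCofinalFor Set.inter_subset_left hcof
    · exact (IWS.isLUB_principals x).of_isCofinalFor Set.inter_subset_left hcof
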